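/- arXiv:2604.17415 — 3 statements merged into one kernel-verified Lean document; each statement's English description precedes it below -/
import Mathlib

section
/- Let d ≥ 1, α > 0, σ > 0, μ ∈ ℝ^d, and let V : ℝ^d → ℝ be continuously differentiable. Suppose Z := ∫_{ℝ^d} exp(V(y)/α) φ_{μ,σ}(y) dy is finite and positive, and define the exponentially tilted density q(y) := exp(V(y)/α) φ_{μ,σ}(y) / Z. Assume that y ↦ y_j q(y), y ↦ ∂_j V(y) q(y), and y ↦ ∂_j q(y) are Lebesgue integrable on ℝ^d for every coordinate j, and that for every j and almost every fixed choice of the remaining coordinates, q(y) → 0 as y_j → ±∞. Then the mean of q satisfies ∫_{ℝ^d} y q(y) dy = μ + (σ²/α) ∫_{ℝ^d} ∇V(y) q(y) dy. -/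
open MeasureTheory Filter

/-!
Stein's identity for the tilted Gaussian. Differentiating `q = exp(V/α) φ_{μ,σ} / Z` gives
`∂_j q = (∂_j V / α - (y_j - μ_j) / σ²) q`, so `∂_j q` is integrable as soon as `y_j q` and
`∂_j V q` are. An integrable function with integrable partial derivative has
`∫ ∂_j q = 0` (integrate by parts against the constant `1`), and with `∫ q = 1` this rearranges
to `∫ y_j q = μ_j + (σ²/α) ∫ ∂_j V q`.
-/

/-- The density of the Gaussian `N(μ, σ²I)` on `ℝ^d`:
`φ_{μ,σ}(y) = (2πσ²)^{-d/2} exp(-‖y-μ‖²/(2σ²))`. -/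
noncomputable def gaussDensity (d : ℕ) (μ : EuclideanSpace ℝ (Fin d)) (σ : ℝ)
    (y : EuclideanSpace ℝ (Fin d)) : ℝ :=
  (2 * Real.pi * σ ^ 2) ^ (-(d : ℝ) / 2) * Real.exp (-‖y - μ‖ ^ 2 / (2 * σ ^ 2))

theorem integral_fderiv_apply_eq_zero {E F : Type*} [NormedAddCommGroup E] [NormedSpace ℝ E]
    [FiniteDimensional ℝ E] [MeasurableSpace E] [BorelSpace E] {μ : Measure E}
    [μ.IsAddHaarMeasure] [NormedAddCommGroup F] [NormedSpace ℝ F] {f : E → F} {v : E}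
    (hf : Differentiable ℝ f) (hfi : Integrable f μ)
    (hf'i : Integrable (fun x ↦ fderiv ℝ f x v) μ) :
    ∫ x, fderiv ℝ f x v ∂μ = 0 := by
  simpa using integral_smul_fderiv_eq_neg_fderiv_smul_of_integrable (μ := μ)
    (f := fun _ ↦ (1 : ℝ)) (g := f) (v := v) (by simp) (by simpa using hf'i) (by simpa using hfi)
    (fun _ _ ↦ differentiableAt_const _) (fun x _ ↦ hf x)

theorem EuclideanSpace.gradient_apply {ι : Type*} [Fintype ι] [DecidableEq ι]
    (f : EuclideanSpace ℝ ι → ℝ) (x : EuclideanSpace ℝ ι) (i : ι) :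
    gradient f x i = fderiv ℝ f x (EuclideanSpace.single i 1) := by
  rw [← inner_gradient_left, EuclideanSpace.inner_single_right]
  simp

section TiltedGaussian

variable {d : ℕ} {μ : EuclideanSpace ℝ (Fin d)} {σ : ℝ}

theorem hasFDerivAt_gaussDensity (y : EuclideanSpace ℝ (Fin d)) :
    HasFDerivAt (gaussDensity d μ σ)
      (-(gaussDensity d μ σ y / σ ^ 2) • innerSL ℝ (y - μ)) y := by
  have hφ : gaussDensity d μ σ = fun y ↦
      (2 * Real.pi * σ ^ 2) ^ (-(d : ℝ) / 2) * Real.exp (-‖y - μ‖ ^ 2 * (2 * σ ^ 2)⁻¹) := by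
    ext y
    simp only [gaussDensity, div_eq_mul_inv]
  rw [hφ]
  have h := (((hasFDerivAt_id y).sub_const μ).norm_sq.neg.mul_const (2 * σ ^ 2)⁻¹).exp.const_mul
    ((2 * Real.pi * σ ^ 2) ^ (-(d : ℝ) / 2))
  refine h.congr_fderiv ?_
  ext v
  simp only [map_sub, ContinuousLinearMap.comp_id, neg_apply, smul_apply, sub_apply,
    coe_innerSL_apply, smul_eq_mul, nsmul_eq_mul, id_eq, Pi.neg_apply]
  ring

noncomputable def tiltedGaussDensity (d : ℕ) (μ : EuclideanSpace ℝ (Fin d)) (σ α : ℝ)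
    (V : EuclideanSpace ℝ (Fin d) → ℝ) (Z : ℝ) (y : EuclideanSpace ℝ (Fin d)) : ℝ :=
  Real.exp (V y / α) * gaussDensity d μ σ y / Z

variable {α Z : ℝ} {V : EuclideanSpace ℝ (Fin d) → ℝ}

theorem hasFDerivAt_tiltedGaussDensity {V' : EuclideanSpace ℝ (Fin d) →L[ℝ] ℝ}
    {y : EuclideanSpace ℝ (Fin d)} (hV : HasFDerivAt V V' y) :
    HasFDerivAt (tiltedGaussDensity d μ σ α V Z)
      (tiltedGaussDensity d μ σ α V Z y • (α⁻¹ • V' - (σ ^ 2)⁻¹ • innerSL ℝ (y - μ))) y := by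
  have hexp : HasFDerivAt (fun y ↦ Real.exp (V y / α)) (Real.exp (V y / α) • α⁻¹ • V') y := by
    simpa only [div_eq_mul_inv, smul_smul, mul_comm α⁻¹] using (hV.mul_const α⁻¹).exp
  have hq : tiltedGaussDensity d μ σ α V Z =
      fun y ↦ Real.exp (V y / α) * gaussDensity d μ σ y * Z⁻¹ :=
    funext fun _ ↦ div_eq_mul_inv _ _
  rw [hq]
  refine ((hexp.mul (hasFDerivAt_gaussDensity y)).mul_const Z⁻¹).congr_fderiv ?_
  ext v
  simp only [map_sub, smul_add, add_apply, smul_apply, sub_apply, coe_innerSL_apply,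
    smul_eq_mul]
  ring

theorem fderiv_tiltedGaussDensity_single {y : EuclideanSpace ℝ (Fin d)}
    (hV : DifferentiableAt ℝ V y) (j : Fin d) :
    fderiv ℝ (tiltedGaussDensity d μ σ α V Z) y (EuclideanSpace.single j 1) =
      (α⁻¹ * fderiv ℝ V y (EuclideanSpace.single j 1) - (σ ^ 2)⁻¹ * (y j - μ j)) *
        tiltedGaussDensity d μ σ α V Z y := by
  rw [(hasFDerivAt_tiltedGaussDensity hV.hasFDerivAt).fderiv]
  simp only [map_sub, smul_apply, sub_apply, smul_eq_mul, coe_innerSL_apply,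
    EuclideanSpace.inner_single_right, Real.ringHom_apply, one_mul]
  ring

theorem integral_tiltedGaussDensity
    (hZ : Z = ∫ y, Real.exp (V y / α) * gaussDensity d μ σ y) (hZ₀ : Z ≠ 0) :
    ∫ y, tiltedGaussDensity d μ σ α V Z y = 1 := by
  simp only [tiltedGaussDensity, integral_div, ← hZ, div_self hZ₀]

theorem integral_coord_mul_tiltedGaussDensity (hσ : σ ≠ 0) (hV : Differentiable ℝ V)
    (hZ : Z = ∫ y, Real.exp (V y / α) * gaussDensity d μ σ y) (hZ₀ : Z ≠ 0)
    (hZint : Integrable fun y ↦ Real.exp (V y / α) * gaussDensity d μ σ y) (j : Fin d)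
    (hcoord : Integrable fun y : EuclideanSpace ℝ (Fin d) ↦
      y j * tiltedGaussDensity d μ σ α V Z y)
    (hgrad : Integrable fun y ↦
      fderiv ℝ V y (EuclideanSpace.single j 1) * tiltedGaussDensity d μ σ α V Z y) :
    ∫ y, y j * tiltedGaussDensity d μ σ α V Z y =
      μ j + σ ^ 2 / α *
        ∫ y, fderiv ℝ V y (EuclideanSpace.single j 1) * tiltedGaussDensity d μ σ α V Z y := by
  set q := tiltedGaussDensity d μ σ α V Z
  have hq : Integrable q := hZint.div_const Z
  have hqd : Differentiable ℝ q := fun y ↦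
    (hasFDerivAt_tiltedGaussDensity (hV y).hasFDerivAt).differentiableAt
  have hsplit : (fun y ↦ fderiv ℝ q y (EuclideanSpace.single j 1)) = fun y ↦
      (α⁻¹ * (fderiv ℝ V y (EuclideanSpace.single j 1) * q y) - (σ ^ 2)⁻¹ * (y j * q y)) +
        (σ ^ 2)⁻¹ * μ j * q y := by
    ext y
    rw [fderiv_tiltedGaussDensity_single (hV y)]
    ring
  have hint : Integrable fun y ↦
      α⁻¹ * (fderiv ℝ V y (EuclideanSpace.single j 1) * q y) - (σ ^ 2)⁻¹ * (y j * q y) :=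
    (hgrad.const_mul _).sub (hcoord.const_mul _)
  have hzero := integral_fderiv_apply_eq_zero hqd hq
    (by rw [hsplit]; exact hint.add (hq.const_mul _))
  rw [hsplit, integral_add hint (hq.const_mul _), integral_sub (hgrad.const_mul _)
    (hcoord.const_mul _), integral_const_mul, integral_const_mul, integral_const_mul,
    integral_tiltedGaussDensity hZ hZ₀] at hzero
  field_simp at hzero
  linear_combination -hzero

end TiltedGaussian

theorem tilted_gaussian_mean_general
    (d : ℕ) (α σ : ℝ) (hσ : 0 < σ)
    (μ : EuclideanSpace ℝ (Fin d)) (V : EuclideanSpace ℝ (Fin d) → ℝ)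
    (hV : ContDiff ℝ 1 V)
    (Z : ℝ) (hZdef : Z = ∫ y, Real.exp (V y / α) * gaussDensity d μ σ y)
    (hZint : Integrable (fun y => Real.exp (V y / α) * gaussDensity d μ σ y))
    (hZpos : 0 < Z)
    (q : EuclideanSpace ℝ (Fin d) → ℝ)
    (hq : ∀ y, q y = Real.exp (V y / α) * gaussDensity d μ σ y / Z)
    (hint1 : ∀ j : Fin d, Integrable (fun y : EuclideanSpace ℝ (Fin d) => y j * q y))
    (hint2 : ∀ j : Fin d, Integrable (fun y : EuclideanSpace ℝ (Fin d) =>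
      fderiv ℝ V y (EuclideanSpace.single j (1 : ℝ)) * q y)) :
    (∫ y, q y • y) = μ + (σ ^ 2 / α) • ∫ y, q y • gradient V y := by
  obtain rfl : q = tiltedGaussDensity d μ σ α V Z := funext hq
  set q := tiltedGaussDensity d μ σ α V Z
  have hmean (j : Fin d) : Integrable fun y ↦ (q y • y) j := by
    simpa only [PiLp.smul_apply, smul_eq_mul, mul_comm] using hint1 j
  have hgrad (j : Fin d) : Integrable fun y ↦ (q y • gradient V y) j := by
    simpa only [PiLp.smul_apply, smul_eq_mul, EuclideanSpace.gradient_apply, mul_comm]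
      using hint2 j
  ext j
  rw [PiLp.add_apply, PiLp.smul_apply, eval_integral_piLp hmean, eval_integral_piLp hgrad]
  simpa only [PiLp.smul_apply, smul_eq_mul, EuclideanSpace.gradient_apply, mul_comm (q _)] using
    integral_coord_mul_tiltedGaussDensity hσ.ne' (hV.differentiable one_ne_zero) hZdef
      hZpos.ne' hZint j (hint1 j) (hint2 j)

/-- **Mean of an exponentially tilted Gaussian.**
For the tilted density `q(y) = exp(V(y)/α) φ_{μ,σ}(y) / Z` satisfying integrability
and coordinatewise vanishing-at-infinity conditions, the mean of `q` satisfies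
`∫ y q(y) dy = μ + (σ²/α) ∫ ∇V(y) q(y) dy`. -/
theorem tilted_gaussian_mean
    (d : ℕ) (hd : 1 ≤ d) (α σ : ℝ) (hα : 0 < α) (hσ : 0 < σ)
    (μ : EuclideanSpace ℝ (Fin d)) (V : EuclideanSpace ℝ (Fin d) → ℝ)
    (hV : ContDiff ℝ 1 V)
    (Z : ℝ) (hZdef : Z = ∫ y, Real.exp (V y / α) * gaussDensity d μ σ y)
    (hZint : Integrable (fun y => Real.exp (V y / α) * gaussDensity d μ σ y))
    (hZpos : 0 < Z)
    (q : EuclideanSpace ℝ (Fin d) → ℝ)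
    (hq : ∀ y, q y = Real.exp (V y / α) * gaussDensity d μ σ y / Z)
    (hint1 : ∀ j : Fin d, Integrable (fun y : EuclideanSpace ℝ (Fin d) => y j * q y))
    (hint2 : ∀ j : Fin d, Integrable (fun y : EuclideanSpace ℝ (Fin d) =>
      fderiv ℝ V y (EuclideanSpace.single j (1 : ℝ)) * q y))
    (hint3 : ∀ j : Fin d, Integrable (fun y : EuclideanSpace ℝ (Fin d) =>
      fderiv ℝ q y (EuclideanSpace.single j (1 : ℝ))))
    (htail : ∀ j : Fin d, ∀ᵐ y : EuclideanSpace ℝ (Fin d),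
      Tendsto (fun r : ℝ => q (WithLp.toLp 2 (Function.update y j r))) atTop (nhds 0) ∧
      Tendsto (fun r : ℝ => q (WithLp.toLp 2 (Function.update y j r))) atBot (nhds 0)) :
    (∫ y, q y • y) = μ + (σ ^ 2 / α) • ∫ y, q y • gradient V y :=
  tilted_gaussian_mean_general d α σ hσ μ V hV Z hZdef hZint hZpos q hq hint1 hint2
end

section
/- Let d ≥ 1 and let v_θ, v†, v_f ∈ ℝ^d and β, c ∈ ℝ. Then ((1+c)/2) ‖(1−β) v† + β v_θ − v_f‖² + ((1−c)/2) ‖(1+β) v† − β v_θ − v_f‖² = β c ‖v_θ − v_f‖² + β(β − c) ‖v_θ − v†‖² + (1 − β c) ‖v† − v_f‖². (The DiffusionNFT objective decomposes exactly into a reward-weighted regression term toward the forward target, an old-policy trust-region anchor, and a constant independent of v_θ.) -/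
open RealInnerProductSpace

section

variable {E : Type*} [NormedAddCommGroup E] [InnerProductSpace ℝ E]

theorem norm_add_smul_sq_real (a b : E) (β : ℝ) :
    ‖a + β • b‖ ^ 2 = ‖a‖ ^ 2 + 2 * β * ⟪a, b⟫ + β ^ 2 * ‖b‖ ^ 2 := by
  rw [norm_add_sq_real, real_inner_smul_right, norm_smul, mul_pow, Real.norm_eq_abs, sq_abs]
  ring

theorem mix_norm_add_sub_smul_sq_real (a b : E) (β c : ℝ) :
    ((1 + c) / 2) * ‖a + β • b‖ ^ 2 + ((1 - c) / 2) * ‖a - β • b‖ ^ 2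
      = ‖a‖ ^ 2 + 2 * β * c * ⟪a, b⟫ + β ^ 2 * ‖b‖ ^ 2 := by
  have hsub := norm_add_smul_sq_real a b (-β)
  rw [neg_smul, ← sub_eq_add_neg] at hsub
  rw [norm_add_smul_sq_real, hsub]
  ring

/-- With `a = v† - v_f` and `b = v_θ - v†`, the two regression targets are `a ± β b` and
`v_θ - v_f = a + b`, so both sides are quadratic forms in `‖a‖², ⟪a, b⟫, ‖b‖²`. -/
theorem nft_objective_decomposition (vθ vdag vf : E) (β c : ℝ) :
    ((1 + c) / 2) * ‖(1 - β) • vdag + β • vθ - vf‖ ^ 2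
      + ((1 - c) / 2) * ‖(1 + β) • vdag - β • vθ - vf‖ ^ 2
    = β * c * ‖vθ - vf‖ ^ 2 + β * (β - c) * ‖vθ - vdag‖ ^ 2
      + (1 - β * c) * ‖vdag - vf‖ ^ 2 := by
  have hplus : (1 - β) • vdag + β • vθ - vf = (vdag - vf) + β • (vθ - vdag) := by module
  have hminus : (1 + β) • vdag - β • vθ - vf = (vdag - vf) - β • (vθ - vdag) := by module
  have hθ : vθ - vf = (vdag - vf) + (1 : ℝ) • (vθ - vdag) := by module
  rw [hplus, hminus, hθ, mix_norm_add_sub_smul_sq_real, norm_add_smul_sq_real]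
  ring

end

theorem diffusion_nft_decomposition_general
    (d : ℕ) (β c : ℝ)
    (vθ vdag vf : EuclideanSpace ℝ (Fin d)) :
    ((1 + c) / 2) * ‖(1 - β) • vdag + β • vθ - vf‖ ^ 2
      + ((1 - c) / 2) * ‖(1 + β) • vdag - β • vθ - vf‖ ^ 2
    = β * c * ‖vθ - vf‖ ^ 2 + β * (β - c) * ‖vθ - vdag‖ ^ 2
      + (1 - β * c) * ‖vdag - vf‖ ^ 2 :=
  nft_objective_decomposition vθ vdag vf β c

/-- **Exact decomposition of the DiffusionNFT objective.**
`((1+c)/2)‖(1−β)v† + βv_θ − v_f‖² + ((1−c)/2)‖(1+β)v† − βv_θ − v_f‖²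
 = βc‖v_θ − v_f‖² + β(β−c)‖v_θ − v†‖² + (1−βc)‖v† − v_f‖²`:
a reward-weighted regression term toward the forward target, an old-policy
trust-region anchor, and a constant independent of `v_θ`. -/
theorem diffusion_nft_decomposition
    (d : ℕ) (hd : 1 ≤ d) (β c : ℝ)
    (vθ vdag vf : EuclideanSpace ℝ (Fin d)) :
    ((1 + c) / 2) * ‖(1 - β) • vdag + β • vθ - vf‖ ^ 2
      + ((1 - c) / 2) * ‖(1 + β) • vdag - β • vθ - vf‖ ^ 2
    = β * c * ‖vθ - vf‖ ^ 2 + β * (β - c) * ‖vθ - vdag‖ ^ 2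
      + (1 - β * c) * ‖vdag - vf‖ ^ 2 :=
  diffusion_nft_decomposition_general d β c vθ vdag vf
end

section
/- Let β : ℝ → ℝ be continuous, define ᾱ(t) := exp(−∫₀ᵗ β(s) ds), and set a(t) := √(ᾱ(t)) and b(t) := √(1 − ᾱ(t)). Then for every t with 0 < ᾱ(t) < 1, a and b are differentiable at t and the two coefficients of the affine-flow ODE satisfy a'(t)/a(t) = −β(t)/2 and ( a'(t) b(t)² − a(t) b'(t) b(t) )/a(t) = −β(t)/2. (The flow ODE of the VP-SDE therefore takes the form dx = −(β(t)/2) x dt − (β(t)/2) ∇ log p_t(x) dt.) -/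
/-! Both coefficients reduce to the logarithmic derivative of `a = √ᾱ`. Since `ᾱ` is the
exponential of `-∫₀ᵗ β`, its logarithmic derivative is `-β`, so that of `√ᾱ` is `-β/2`. Since
`a² + b² = 1` near `t` (the process is variance preserving), `b b' = -a a'`, and then
`(a' b² - a b' b)/a = a' (a² + b²)/a = a'/a`. -/

open Topology

theorem hasDerivAt_exp_neg_integral {β : ℝ → ℝ} (hβ : Continuous β) (t : ℝ) :
    HasDerivAt (fun u => Real.exp (-(∫ s in (0 : ℝ)..u, β s)))
      (Real.exp (-(∫ s in (0 : ℝ)..t, β s)) * -β t) t :=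
  (hβ.integral_hasStrictDerivAt 0 t).hasDerivAt.neg.exp

theorem deriv_sqrt_div_sqrt {f : ℝ → ℝ} {f' t : ℝ} (hf : HasDerivAt f f' t)
    (hpos : 0 < f t) : deriv (fun u => √(f u)) t / √(f t) = f' / (2 * f t) := by
  rw [(hf.sqrt hpos.ne').deriv, div_div, mul_assoc, Real.mul_self_sqrt hpos.le]

theorem affine_score_coeff_eq_drift_coeff {a b : ℝ → ℝ} {t : ℝ} (ha : DifferentiableAt ℝ a t)
    (hb : DifferentiableAt ℝ b t) (hvp : ∀ᶠ u in 𝓝 t, a u ^ 2 + b u ^ 2 = 1) (ha0 : a t ≠ 0) :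
    (deriv a t * b t ^ 2 - a t * deriv b t * b t) / a t = deriv a t / a t := by
  have hsum : HasDerivAt (fun u => a u ^ 2 + b u ^ 2)
      (2 * a t ^ 1 * deriv a t + 2 * b t ^ 1 * deriv b t) t :=
    (ha.hasDerivAt.pow 2).add (hb.hasDerivAt.pow 2)
  have hconst : HasDerivAt (fun u => a u ^ 2 + b u ^ 2) 0 t :=
    (hasDerivAt_const t (1 : ℝ)).congr_of_eventuallyEq hvp
  have horth : a t * deriv a t + b t * deriv b t = 0 := by linarith [hsum.unique hconst]
  have hsq : a t ^ 2 + b t ^ 2 = 1 := hvp.self_of_nhds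
  rw [div_left_inj' ha0]
  linear_combination deriv a t * hsq - a t * horth

/-- **Coefficients of the affine-flow ODE for the VP-SDE.**
With `ᾱ(t) = exp(−∫₀ᵗ β(s) ds)`, `a(t) = √(ᾱ(t))`, `b(t) = √(1−ᾱ(t))`, at any `t`
with `0 < ᾱ(t) < 1`, `a` and `b` are differentiable and the two coefficients of the
affine-flow ODE satisfy `a'(t)/a(t) = −β(t)/2` and
`(a'(t)b(t)² − a(t)b'(t)b(t))/a(t) = −β(t)/2`: the flow ODE of the VP-SDE is
`dx = −(β(t)/2)x dt − (β(t)/2)∇log p_t(x) dt`. -/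
theorem vp_sde_flow_ode_coefficients
    (β : ℝ → ℝ) (hβ : Continuous β)
    (abar a b : ℝ → ℝ)
    (habar : ∀ t, abar t = Real.exp (-(∫ s in (0 : ℝ)..t, β s)))
    (ha : ∀ t, a t = Real.sqrt (abar t))
    (hb : ∀ t, b t = Real.sqrt (1 - abar t)) :
    ∀ t : ℝ, 0 < abar t → abar t < 1 →
      DifferentiableAt ℝ a t ∧ DifferentiableAt ℝ b t ∧
      deriv a t / a t = -β t / 2 ∧
      (deriv a t * (b t) ^ 2 - a t * deriv b t * b t) / a t = -β t / 2 := by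
  intro t h0 h1
  have habar' : HasDerivAt abar (abar t * -β t) t := by
    rw [funext habar]
    exact hasDerivAt_exp_neg_integral hβ t
  obtain rfl : a = fun u => √(abar u) := funext ha
  obtain rfl : b = fun u => √(1 - abar u) := funext hb
  have ha' := habar'.sqrt h0.ne'
  have hb' := (habar'.const_sub 1).sqrt (sub_pos.2 h1).ne'
  have hdrift : deriv (fun u => √(abar u)) t / √(abar t) = -β t / 2 := by
    rw [deriv_sqrt_div_sqrt habar' h0]
    field_simp
  have hvp : ∀ᶠ u in 𝓝 t, √(abar u) ^ 2 + √(1 - abar u) ^ 2 = 1 := by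
    filter_upwards [habar'.continuousAt.eventually_lt continuousAt_const h1] with u hu
    rw [Real.sq_sqrt (habar u ▸ Real.exp_pos _).le, Real.sq_sqrt (sub_pos.2 hu).le]
    ring
  refine ⟨ha'.differentiableAt, hb'.differentiableAt, hdrift, ?_⟩
  rw [affine_score_coeff_eq_drift_coeff ha'.differentiableAt hb'.differentiableAt hvp
    (Real.sqrt_pos.2 h0).ne', hdrift]
end
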